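/- Tweedie's formula: Let X₀ be a random vector in ℝ^d with density p₀, let ε ∼ N(0, I_d) be independent of X₀, and for μ_t, σ_t > 0 set X_t = μ_t X₀ + σ_t ε with marginal density p_t(x) = ∫ φ_d(x; μ_t x₀, σ_t² I_d) p₀(x₀) dx₀. Then for every x ∈ ℝ^d, ∇ log p_t(x) + x/σ_t² = (μ_t/σ_t²) · E[X₀ | X_t = x], where E[X₀ | X_t = x] = ∫ x₀ φ_d(x; μ_t x₀, σ_t² I_d) p₀(x₀) dx₀ / p_t(x). -/

import Mathlib

/-!
Differentiating under the integral sign (legitimate because `p₀` is continuous with compact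
support, so the derivative of the integrand is dominated by a constant on `tsupport p₀`)
gives `∂ₖ p_t(x) = ∫ p₀(x₀) ∂ₖ φ(x; μ_t x₀, σ_t²)`, and the Gaussian kernel satisfies
`∂ₖ φ(x; m, σ²) = -(xₖ - mₖ)/σ² · φ(x; m, σ²)`. Dividing by `p_t(x) > 0` turns the two
resulting integrals into `-xₖ/σ_t²` and `μ_t/σ_t² · E[X₀ₖ | X_t = x]`.
-/

open MeasureTheory Real

/-- The `d`-dimensional Gaussian density `φ_d(x; m, σ² I_d)`. -/
noncomputable def gaussKernel (d : ℕ) (σ2 : ℝ) (x m : Fin d → ℝ) : ℝ :=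
  (2 * Real.pi * σ2) ^ (-(d : ℝ) / 2) *
    Real.exp (-(∑ i, (x i - m i) ^ 2) / (2 * σ2))

theorem integral_mul_pos_of_pos {X : Type*} [MeasurableSpace X] {μ : Measure X} {g p : X → ℝ}
    (hg : ∀ x, 0 < g x) (hp : 0 ≤ p) (hp_int : Integrable p μ)
    (hgp_int : Integrable (fun x => g x * p x) μ) (hp_pos : 0 < ∫ x, p x ∂μ) :
    0 < ∫ x, g x * p x ∂μ := by
  rw [integral_pos_iff_support_of_nonneg (fun x => mul_nonneg (hg x).le (hp x)) hgp_int,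
    Function.support_mul, Function.support_eq_univ fun x => (hg x).ne', Set.univ_inter]
  exact (integral_pos_iff_support_of_nonneg hp hp_int).1 hp_pos

theorem hasFDerivAt_integral_mul_of_hasCompactSupport
    {E X : Type*} [NormedAddCommGroup E] [NormedSpace ℝ E] [LocallyCompactSpace E]
    [TopologicalSpace X] [MeasurableSpace X] [OpensMeasurableSpace X]
    {μ : Measure X} [IsFiniteMeasureOnCompacts μ]
    {K : E → X → ℝ} {K' : E → X → E →L[ℝ] ℝ} {p : X → ℝ}
    (hK : ∀ y, Continuous (K y)) (hK' : Continuous (Function.uncurry K'))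
    (hK'K : ∀ y x, HasFDerivAt (K · x) (K' y x) y)
    (hp : Continuous p) (hp_supp : HasCompactSupport p) (y₀ : E) :
    HasFDerivAt (fun y => ∫ x, K y x * p x ∂μ) (∫ x, p x • K' y₀ x ∂μ) y₀ := by
  obtain ⟨U, hU, hU_mem⟩ := exists_compact_mem_nhds y₀
  obtain ⟨C, hC⟩ := (hU.prod hp_supp).exists_bound_of_continuousOn
    ((hp.comp continuous_snd).smul hK').continuousOn
  have hint : ∀ y, Integrable (fun x => K y x * p x) μ := fun y =>
    ((hK y).mul hp).integrable_of_hasCompactSupport hp_supp.mul_left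
  refine hasFDerivAt_integral_of_dominated_of_fderiv_le
    (bound := (tsupport p).indicator fun _ => C) hU_mem
    (.of_forall fun y => (hint y).aestronglyMeasurable) (hint y₀)
    ((hp.smul (hK'.comp (Continuous.prodMk_right y₀))).integrable_of_hasCompactSupport
      hp_supp.smul_right).aestronglyMeasurable ?_ ?_
    (.of_forall fun x y _ => (hK'K y x).mul_const (p x))
  · refine .of_forall fun x y hy => ?_
    by_cases hx : x ∈ tsupport p
    · simpa [Set.indicator_of_mem hx] using hC (y, x) ⟨hy, hx⟩
    · simp [image_eq_zero_of_notMem_tsupport hx, Set.indicator_of_notMem hx]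
  · exact (integrableOn_const hp_supp.isCompact.measure_lt_top.ne).integrable_indicator
      (isClosed_tsupport p).measurableSet

noncomputable def gaussKernelFDeriv (d : ℕ) (σ2 : ℝ) (x m : Fin d → ℝ) :
    (Fin d → ℝ) →L[ℝ] ℝ :=
  (-(gaussKernel d σ2 x m / σ2)) • ∑ i, (x i - m i) • ContinuousLinearMap.proj i

theorem gaussKernel_pos {d : ℕ} {σ2 : ℝ} (hσ2 : 0 < σ2) (x m : Fin d → ℝ) :
    0 < gaussKernel d σ2 x m := by
  unfold gaussKernel
  positivity

theorem hasFDerivAt_gaussKernel {d : ℕ} {σ2 : ℝ} (hσ2 : σ2 ≠ 0) (x m : Fin d → ℝ) :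
    HasFDerivAt (gaussKernel d σ2 · m) (gaussKernelFDeriv d σ2 x m) x := by
  have hsq : HasFDerivAt (fun y : Fin d → ℝ => ∑ i, (y i - m i) ^ 2)
      (∑ i, (2 * (x i - m i)) • ContinuousLinearMap.proj i) x :=
    HasFDerivAt.fun_sum fun i _ => by
      simpa using ((hasFDerivAt_apply (𝕜 := ℝ) i x).sub_const (m i)).pow 2
  refine ((hsq.fun_neg.mul_const (2 * σ2)⁻¹).exp.const_mul _).congr_fderiv ?_
  ext v
  simp only [mul_inv_rev, neg_mul, smul_neg, neg_apply, smul_apply, sum_apply,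
    ContinuousLinearMap.proj_apply, smul_eq_mul, Finset.mul_sum, gaussKernelFDeriv, gaussKernel,
    Finset.sum_neg_distrib, neg_inj]
  refine Finset.sum_congr rfl fun i _ => ?_
  have hexp : -((∑ i, (x i - m i) ^ 2) * (σ2⁻¹ * 2⁻¹)) =
      (-∑ i, (x i - m i) ^ 2) / (2 * σ2) := by
    field_simp
  rw [hexp]
  field_simp

theorem gaussKernelFDeriv_apply_single {d : ℕ} (σ2 : ℝ) (x m : Fin d → ℝ) (k : Fin d) :
    gaussKernelFDeriv d σ2 x m (Pi.single k 1) = -(gaussKernel d σ2 x m / σ2) * (x k - m k) := by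
  simp [gaussKernelFDeriv, Pi.single_apply]

@[fun_prop]
theorem Continuous.gaussKernel {α : Type*} [TopologicalSpace α] {d : ℕ} {σ2 : ℝ}
    {f g : α → Fin d → ℝ} (hf : Continuous f) (hg : Continuous g) :
    Continuous fun a => gaussKernel d σ2 (f a) (g a) := by
  unfold _root_.gaussKernel
  fun_prop

@[fun_prop]
theorem Continuous.gaussKernelFDeriv {α : Type*} [TopologicalSpace α] {d : ℕ} {σ2 : ℝ}
    {f g : α → Fin d → ℝ} (hf : Continuous f) (hg : Continuous g) :
    Continuous fun a => gaussKernelFDeriv d σ2 (f a) (g a) := by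
  unfold _root_.gaussKernelFDeriv
  fun_prop

theorem tweedie_formula
    {d : ℕ} (μt σt : ℝ) (hσt : 0 < σt)
    (p0 : (Fin d → ℝ) → ℝ) (hp0_cont : Continuous p0) (hp0_supp : HasCompactSupport p0)
    (hp0_nonneg : ∀ x, 0 ≤ p0 x) (hp0_int : ∫ x, p0 x = 1)
    (pt : (Fin d → ℝ) → ℝ)
    (hpt : pt = fun x => ∫ x0, gaussKernel d (σt ^ 2) x (μt • x0) * p0 x0)
    (x : Fin d → ℝ) (k : Fin d) :
    fderiv ℝ (fun y => Real.log (pt y)) x (Pi.single k 1) + x k / σt ^ 2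
      = (μt / σt ^ 2) *
          ((∫ x0, x0 k * gaussKernel d (σt ^ 2) x (μt • x0) * p0 x0) / pt x) := by
  have hσ2 : 0 < σt ^ 2 := by positivity
  have hG : Integrable fun x0 => gaussKernel d (σt ^ 2) x (μt • x0) * p0 x0 :=
    (by fun_prop : Continuous _).integrable_of_hasCompactSupport hp0_supp.mul_left
  have hxG :
      Integrable fun x0 : Fin d → ℝ => x0 k * gaussKernel d (σt ^ 2) x (μt • x0) * p0 x0 :=
    (by fun_prop : Continuous _).integrable_of_hasCompactSupport hp0_supp.mul_left
  have hpt_deriv :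
      HasFDerivAt pt (∫ x0, p0 x0 • gaussKernelFDeriv d (σt ^ 2) x (μt • x0)) x :=
    hpt ▸ hasFDerivAt_integral_mul_of_hasCompactSupport (fun _ => by fun_prop) (by fun_prop)
      (fun y _ => hasFDerivAt_gaussKernel hσ2.ne' y _) hp0_cont hp0_supp x
  have hpt_pos : 0 < pt x := hpt ▸ integral_mul_pos_of_pos (fun _ => gaussKernel_pos hσ2 _ _)
    hp0_nonneg (hp0_cont.integrable_of_hasCompactSupport hp0_supp) hG (hp0_int ▸ one_pos)
  have hpartial : fderiv ℝ pt x (Pi.single k 1) = (μt * (∫ x0, x0 k *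
      gaussKernel d (σt ^ 2) x (μt • x0) * p0 x0) - x k * pt x) / σt ^ 2 := by
    rw [hpt_deriv.fderiv, ContinuousLinearMap.integral_apply
      ((by fun_prop : Continuous _).integrable_of_hasCompactSupport hp0_supp.smul_right)]
    simp only [smul_apply, gaussKernelFDeriv_apply_single, smul_eq_mul, Pi.smul_apply]
    rw [hpt, ← integral_const_mul, ← integral_const_mul,
      ← integral_sub (hxG.const_mul _) (hG.const_mul _), ← integral_div]
    congr 1 with x0
    ring
  rw [(hpt_deriv.log hpt_pos.ne').fderiv, smul_apply, ← hpt_deriv.fderiv, hpartial, smul_eq_mul]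
  field_simp
  ring
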